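/- arXiv:2510.17669 — 6 statements merged into one kernel-verified Lean document; each statement's English description precedes it below -/
import Mathlib

section
/- Let N ≥ 3 be an integer, let 𝔞, 𝔡 > 0 and 𝔟 ∈ ℝ. Then for every z > 0, 𝔡 z^N − 𝔟 z + 𝔞 z^{-(N-1)} ≥ − 𝔟² (N+1)^{(N+1)/(2N−1)} (N−2)^{(N−2)/(2N−1)} / (4 (2N−1) 𝔡^{(N+1)/(2N−1)} 𝔞^{(N−2)/(2N−1)}). -/
/-!
Weighted AM–GM with weights `α = (N+1)/(2N-1)` and `β = (N-2)/(2N-1)` bounds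
`d z^N + a z^{-(N-1)}` below by `M z²` with `M = (d/α)^α (a/β)^β`, because
`α N - β (N-1) = 2`; the quadratic `M z² - b z` is at least `-b²/(4M)`.
-/

open Real

theorem geom_mean_mul_rpow_le_add_mul_rpow {α β c₁ c₂ x p q r : ℝ} (hα : 0 < α) (hβ : 0 < β)
    (hαβ : α + β = 1) (hc₁ : 0 ≤ c₁) (hc₂ : 0 ≤ c₂) (hx : 0 < x) (hr : α * p + β * q = r) :
    (c₁ / α) ^ α * (c₂ / β) ^ β * x ^ r ≤ c₁ * x ^ p + c₂ * x ^ q := by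
  have hp : 0 ≤ x ^ p := (rpow_pos_of_pos hx p).le
  have hq : 0 ≤ x ^ q := (rpow_pos_of_pos hx q).le
  have hamgm := geom_mean_le_arith_mean2_weighted hα.le hβ.le
    (mul_nonneg (div_nonneg hc₁ hα.le) hp) (mul_nonneg (div_nonneg hc₂ hβ.le) hq) hαβ
  have hgeom :
      (c₁ / α * x ^ p) ^ α * (c₂ / β * x ^ q) ^ β = (c₁ / α) ^ α * (c₂ / β) ^ β * x ^ r := by
    rw [mul_rpow (div_nonneg hc₁ hα.le) hp, mul_rpow (div_nonneg hc₂ hβ.le) hq,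
      ← rpow_mul hx.le, ← rpow_mul hx.le, mul_mul_mul_comm, ← rpow_add hx, ← hr,
      mul_comm p, mul_comm q]
  have harith : α * (c₁ / α * x ^ p) + β * (c₂ / β * x ^ q) = c₁ * x ^ p + c₂ * x ^ q := by
    field_simp
  rwa [hgeom, harith] at hamgm

theorem neg_sq_div_le_sub_mul_of_mul_sq_le {M f z : ℝ} (hM : 0 < M) (h : M * z ^ 2 ≤ f) (b : ℝ) :
    -(b ^ 2 / (4 * M)) ≤ f - b * z := by
  rw [← neg_div, div_le_iff₀ (by positivity)]
  nlinarith [sq_nonneg (2 * M * z - b)]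

theorem div_div_rpow_mul_div_div_rpow {p q s d a : ℝ} (hp : 0 < p) (hq : 0 < q) (hs : p + q = s)
    (hd : 0 ≤ d) (ha : 0 ≤ a) :
    (d / (p / s)) ^ (p / s) * (a / (q / s)) ^ (q / s) =
      s * d ^ (p / s) * a ^ (q / s) / (p ^ (p / s) * q ^ (q / s)) := by
  have hs0 : 0 < s := hs ▸ add_pos hp hq
  have hsum : s ^ (p / s) * s ^ (q / s) = s := by
    rw [← rpow_add hs0, ← add_div, hs, div_self hs0.ne', rpow_one]
  rw [div_div_eq_mul_div, div_div_eq_mul_div, div_rpow (by positivity) hp.le,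
    div_rpow (by positivity) hq.le, mul_rpow hd hs0.le, mul_rpow ha hs0.le]
  have : 0 < p ^ (p / s) := rpow_pos_of_pos hp _
  have : 0 < q ^ (q / s) := rpow_pos_of_pos hq _
  field_simp
  linear_combination d ^ (p / s) * a ^ (q / s) * hsum

theorem neg_sq_div_le_mul_rpow_sub_mul_add_mul_rpow {n a d z : ℝ} (hn : 2 < n) (ha : 0 < a)
    (hd : 0 < d) (hz : 0 < z) (b : ℝ) :
    -(b ^ 2 * (n + 1) ^ ((n + 1) / (2 * n - 1)) * (n - 2) ^ ((n - 2) / (2 * n - 1))) /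
        (4 * (2 * n - 1) * d ^ ((n + 1) / (2 * n - 1)) * a ^ ((n - 2) / (2 * n - 1))) ≤
      d * z ^ n - b * z + a * z ^ (-(n - 1)) := by
  have hs : 0 < 2 * n - 1 := by linarith
  have hn₁ : 0 < (n + 1) ^ ((n + 1) / (2 * n - 1)) := rpow_pos_of_pos (by linarith) _
  have hn₂ : 0 < (n - 2) ^ ((n - 2) / (2 * n - 1)) := rpow_pos_of_pos (by linarith) _
  have hamgm := geom_mean_mul_rpow_le_add_mul_rpow (α := (n + 1) / (2 * n - 1))
    (β := (n - 2) / (2 * n - 1)) (p := n) (q := -(n - 1)) (r := 2)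
    (div_pos (by linarith) hs) (div_pos (by linarith) hs)
    (by rw [← add_div, div_eq_one_iff_eq hs.ne']; ring) hd.le ha.le hz
    (by rw [div_mul_eq_mul_div, div_mul_eq_mul_div, ← add_div, div_eq_iff hs.ne']; ring)
  rw [div_div_rpow_mul_div_div_rpow (by linarith) (by linarith) (by ring) hd.le ha.le,
    rpow_two] at hamgm
  have hbound := neg_sq_div_le_sub_mul_of_mul_sq_le (by positivity) hamgm b
  convert hbound using 1
  · field_simp
  · ring

theorem stmt_5 (N : ℕ) (hN : 3 ≤ N) (a b d : ℝ) (ha : 0 < a) (hd : 0 < d)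
    (z : ℝ) (hz : 0 < z) :
    d * z ^ (N : ℝ) - b * z + a * z ^ (-((N : ℝ) - 1)) ≥
      -(b ^ 2 * ((N : ℝ) + 1) ^ (((N : ℝ) + 1) / (2 * (N : ℝ) - 1)) *
          ((N : ℝ) - 2) ^ (((N : ℝ) - 2) / (2 * (N : ℝ) - 1))) /
        (4 * (2 * (N : ℝ) - 1) * d ^ (((N : ℝ) + 1) / (2 * (N : ℝ) - 1)) *
          a ^ (((N : ℝ) - 2) / (2 * (N : ℝ) - 1))) :=
  neg_sq_div_le_mul_rpow_sub_mul_add_mul_rpow (by exact_mod_cast hN) ha hd hz b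
end

section
/- For all positive real numbers x and y with x ≠ y, one has x^{x/(x+y)} · y^{y/(x+y)} < x + y. -/
theorem stmt_9_general (x y : ℝ) (hx : 0 < x) (hy : 0 < y) :
    x ^ (x / (x + y)) * y ^ (y / (x + y)) < x + y := by
  have hs : 0 < x + y := by positivity
  calc x ^ (x / (x + y)) * y ^ (y / (x + y))
      ≤ x / (x + y) * x + y / (x + y) * y :=
        Real.geom_mean_le_arith_mean2_weighted (by positivity) (by positivity) hx.le hy.le
          (by field_simp)
    _ = (x ^ 2 + y ^ 2) / (x + y) := by ring
    _ < x + y := by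
        rw [div_lt_iff₀ hs]
        nlinarith [mul_pos hx hy]

theorem stmt_9 (x y : ℝ) (hx : 0 < x) (hy : 0 < y) (hxy : x ≠ y) :
    x ^ (x / (x + y)) * y ^ (y / (x + y)) < x + y :=
  stmt_9_general x y hx hy
end

section
/- Let N ≥ 3 be an integer, let 𝔞, 𝔡 > 0 and 𝔟 ∈ ℝ. Then for every z > 0, 𝔡 z^N − 𝔟 z + 𝔞 z^{-(N-1)} > (2N−1) / (2 (N−1)^{(N−1)/(2N−1)} N^{N/(2N−1)}) · (𝔡^{2N/(2N−1)} 𝔞^{(2N−2)/(2N−1)} − 𝔟²) / (𝔡^{(N+1)/(2N−1)} 𝔞^{(N−2)/(2N−1)}). -/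
/-!
Write `X = d z^N`, `Y = a z^(-(N-1))` and `s = 2N - 1`. Weighted AM-GM with weights
`((N-1)/s, N/s)` makes the powers of `z` cancel and gives `s M ≤ P (X + Y)`; with weights
`((N+1)/s, (N-2)/s)` it leaves `z²` and gives `s E z² ≤ Q (X + Y)`. Since `P Q < s²`, half of
`X + Y` exceeds `P E z² / (2s)`, which absorbs `-b z` up to `s b² / (2 P E)` by completing the
square, while the other half is at least `s M / (2P)`. Here `M = d^((N-1)/s) a^(N/s)`,
`E = d^((N+1)/s) a^((N-2)/s)`, `P = (N-1)^((N-1)/s) N^(N/s)` and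
`Q = (N+1)^((N+1)/s) (N-2)^((N-2)/s)`; the right-hand side of the theorem is
`s M / (2P) - s b² / (2 P E)`.
-/

open Real

lemma rpow_div_mul_rpow_div_mul_le {p q s X Y : ℝ} (hp : 0 < p) (hq : 0 < q) (hs : p + q = s)
    (hX : 0 ≤ X) (hY : 0 ≤ Y) :
    X ^ (p / s) * Y ^ (q / s) * s ≤ p ^ (p / s) * q ^ (q / s) * (X + Y) := by
  have hs0 : 0 < s := hs ▸ add_pos hp hq
  have h := geom_mean_le_arith_mean2_weighted (div_pos hp hs0).le (div_pos hq hs0).le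
    (by positivity : 0 ≤ s * X / p) (by positivity : 0 ≤ s * Y / q)
    (by rw [← add_div, hs, div_self hs0.ne'])
  have hsum : p / s * (s * X / p) + q / s * (s * Y / q) = X + Y := by field_simp
  rw [hsum, div_rpow (by positivity) hp.le, div_rpow (by positivity) hq.le,
    mul_rpow hs0.le hX, mul_rpow hs0.le hY] at h
  have hsp : s ^ (p / s) * s ^ (q / s) = s := by
    rw [← rpow_add hs0, ← add_div, hs, div_self hs0.ne', rpow_one]
  calc X ^ (p / s) * Y ^ (q / s) * s
      = p ^ (p / s) * q ^ (q / s) *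
          (s ^ (p / s) * X ^ (p / s) / p ^ (p / s) *
            (s ^ (q / s) * Y ^ (q / s) / q ^ (q / s))) := by
        field_simp; linear_combination (X ^ (p / s) * Y ^ (q / s)) * hsp.symm
    _ ≤ p ^ (p / s) * q ^ (q / s) * (X + Y) := by gcongr

lemma rpow_div_mul_rpow_div_le {p q s : ℝ} (hp : 0 ≤ p) (hq : 0 ≤ q) (hs : p + q = s)
    (hs0 : 0 < s) : p ^ (p / s) * q ^ (q / s) ≤ (p ^ 2 + q ^ 2) / s :=
  calc p ^ (p / s) * q ^ (q / s) ≤ p / s * p + q / s * q :=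
        geom_mean_le_arith_mean2_weighted (by positivity) (by positivity) hp hq
          (by rw [← add_div, hs, div_self hs0.ne'])
    _ = (p ^ 2 + q ^ 2) / s := by ring

lemma mul_rpow_mul_mul_rpow {d a z : ℝ} (hd : 0 ≤ d) (ha : 0 ≤ a) (hz : 0 < z)
    (p q α β : ℝ) :
    (d * z ^ p) ^ α * (a * z ^ q) ^ β = d ^ α * a ^ β * z ^ (p * α + q * β) := by
  rw [mul_rpow hd (by positivity), mul_rpow ha (by positivity), ← rpow_mul hz.le,
    ← rpow_mul hz.le, rpow_add hz]
  ring

lemma amgm_constants_mul_lt_sq {n : ℝ} (hn : 2 ≤ n) :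
    ((n - 1) ^ ((n - 1) / (2 * n - 1)) * n ^ (n / (2 * n - 1))) *
      ((n + 1) ^ ((n + 1) / (2 * n - 1)) * (n - 2) ^ ((n - 2) / (2 * n - 1))) <
      (2 * n - 1) ^ 2 := by
  have hs : 0 < 2 * n - 1 := by linarith
  calc _ ≤ ((n - 1) ^ 2 + n ^ 2) / (2 * n - 1) * (((n + 1) ^ 2 + (n - 2) ^ 2) / (2 * n - 1)) := by
        gcongr
        · exact rpow_div_mul_rpow_div_le (by linarith) (by linarith) (by ring) hs
        · exact rpow_div_mul_rpow_div_le (by linarith) (by linarith) (by ring) hs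
    _ < (2 * n - 1) ^ 2 := by
        rw [div_mul_div_comm, div_lt_iff₀ (by positivity)]
        nlinarith

lemma lt_sub_mul_of_le_mul {s P Q M E S b z : ℝ} (hs : 0 < s) (hP : 0 < P) (hE : 0 < E)
    (hS : 0 < S) (hPQ : P * Q < s ^ 2) (hM : s * M ≤ P * S) (hz : s * E * z ^ 2 ≤ Q * S) :
    s / (2 * P) * ((M * E - b ^ 2) / E) < S - b * z := by
  have hSz : P * E * z ^ 2 < s * S := by
    have : P * (s * E * z ^ 2) ≤ P * (Q * S) := by gcongr
    nlinarith
  have hsq : b * z ≤ P * E * z ^ 2 / (2 * s) + s * b ^ 2 / (2 * P * E) := by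
    have : 0 ≤ (P * E * z - s * b) ^ 2 / (2 * s * P * E) := by positivity
    have e : (P * E * z - s * b) ^ 2 / (2 * s * P * E)
        = P * E * z ^ 2 / (2 * s) + s * b ^ 2 / (2 * P * E) - b * z := by
      field_simp; ring
    linarith
  have hM' : s * M / (2 * P) ≤ S / 2 := by
    rw [div_le_iff₀ (by positivity)]; linarith
  have hSz' : P * E * z ^ 2 / (2 * s) < S / 2 := by
    rw [div_lt_iff₀ (by positivity)]; linarith
  have e : s / (2 * P) * ((M * E - b ^ 2) / E) = s * M / (2 * P) - s * b ^ 2 / (2 * P * E) := by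
    field_simp
  linarith

theorem stmt_11 (N : ℕ) (hN : 3 ≤ N) (a b d : ℝ) (ha : 0 < a) (hd : 0 < d)
    (z : ℝ) (hz : 0 < z) :
    d * z ^ (N : ℝ) - b * z + a * z ^ (-((N : ℝ) - 1)) >
      (2 * (N : ℝ) - 1) /
          (2 * ((N : ℝ) - 1) ^ (((N : ℝ) - 1) / (2 * (N : ℝ) - 1)) *
            (N : ℝ) ^ ((N : ℝ) / (2 * (N : ℝ) - 1))) *
        ((d ^ (2 * (N : ℝ) / (2 * (N : ℝ) - 1)) *
            a ^ ((2 * (N : ℝ) - 2) / (2 * (N : ℝ) - 1)) - b ^ 2) /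
          (d ^ (((N : ℝ) + 1) / (2 * (N : ℝ) - 1)) *
            a ^ (((N : ℝ) - 2) / (2 * (N : ℝ) - 1)))) := by
  have hn : (3 : ℝ) ≤ N := by exact_mod_cast hN
  set n : ℝ := (N : ℝ)
  have hs : 0 < 2 * n - 1 := by linarith
  have hX : 0 ≤ d * z ^ n := by positivity
  have hY : 0 ≤ a * z ^ (-(n - 1)) := by positivity
  have hcancel : n * ((n - 1) / (2 * n - 1)) + -(n - 1) * (n / (2 * n - 1)) = 0 := by ring
  have hsquare : n * ((n + 1) / (2 * n - 1)) + -(n - 1) * ((n - 2) / (2 * n - 1)) = 2 := by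
    rw [mul_div_assoc', mul_div_assoc', ← add_div, div_eq_iff hs.ne']; ring
  have hM := rpow_div_mul_rpow_div_mul_le (p := n - 1) (q := n) (s := 2 * n - 1)
    (by linarith) (by linarith) (by ring) hX hY
  have hE := rpow_div_mul_rpow_div_mul_le (p := n + 1) (q := n - 2) (s := 2 * n - 1)
    (by linarith) (by linarith) (by ring) hX hY
  rw [mul_rpow_mul_mul_rpow hd.le ha.le hz, hcancel, rpow_zero, mul_one] at hM
  rw [mul_rpow_mul_mul_rpow hd.le ha.le hz, hsquare, rpow_two] at hE
  have hMul : d ^ (2 * n / (2 * n - 1)) * a ^ ((2 * n - 2) / (2 * n - 1)) =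
      d ^ ((n - 1) / (2 * n - 1)) * a ^ (n / (2 * n - 1)) *
        (d ^ ((n + 1) / (2 * n - 1)) * a ^ ((n - 2) / (2 * n - 1))) := by
    rw [show 2 * n / (2 * n - 1) = (n - 1) / (2 * n - 1) + (n + 1) / (2 * n - 1) by ring,
      show (2 * n - 2) / (2 * n - 1) = n / (2 * n - 1) + (n - 2) / (2 * n - 1) by ring,
      rpow_add hd, rpow_add ha]
    ring
  rw [gt_iff_lt, hMul, mul_assoc 2, sub_add_eq_add_sub]
  have hP : 0 < (n - 1) ^ ((n - 1) / (2 * n - 1)) * n ^ (n / (2 * n - 1)) :=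
    mul_pos (rpow_pos_of_pos (by linarith) _) (rpow_pos_of_pos (by linarith) _)
  exact lt_sub_mul_of_le_mul hs hP (by positivity) (by positivity)
    (amgm_constants_mul_lt_sq (by linarith)) (by linarith) (by linarith)
end

section
/- For every integer N ≥ 3, one has (2N−1) / (2 (N−1)^{(N−1)/(2N−1)} N^{N/(2N−1)}) > 2^{1/(N−1)} (N−1) / N^{N/(N−1)}. -/
/-! Both sides are compared with `(N - 1) / N`. On the left, weighted AM-GM with weights
`a / (a + b)`, `b / (a + b)` bounds `a ^ (a / (a + b)) * b ^ (b / (a + b))` by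
`(a ^ 2 + b ^ 2) / (a + b)`, which for `a = N - 1`, `b = N` is small enough. On the right,
`N ^ (N / (N - 1)) = N * N ^ (1 / (N - 1))` and `2 ^ (1 / (N - 1)) < N ^ (1 / (N - 1))`. -/

namespace Real

lemma rpow_div_add_mul_rpow_div_add_le {a b : ℝ} (ha : 0 ≤ a) (hb : 0 ≤ b) (hab : 0 < a + b) :
    a ^ (a / (a + b)) * b ^ (b / (a + b)) ≤ (a ^ 2 + b ^ 2) / (a + b) := by
  have hw : a / (a + b) + b / (a + b) = 1 := by rw [← add_div, div_self hab.ne']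
  calc a ^ (a / (a + b)) * b ^ (b / (a + b)) ≤ a / (a + b) * a + b / (a + b) * b :=
        geom_mean_le_arith_mean2_weighted (by positivity) (by positivity) ha hb hw
    _ = (a ^ 2 + b ^ 2) / (a + b) := by field_simp

lemma div_lt_add_div_two_mul_rpow_mul_rpow {a b : ℝ} (ha : 0 < a) (hab : a < b) :
    a / b < (a + b) / (2 * a ^ (a / (a + b)) * b ^ (b / (a + b))) := by
  have hb : 0 < b := ha.trans hab
  have hGM := rpow_div_add_mul_rpow_div_add_le ha.le hb.le (by positivity)
  have hcube : a ^ 3 < b ^ 3 := by gcongr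
  calc a / b < (a + b) / (2 * ((a ^ 2 + b ^ 2) / (a + b))) := by
        rw [div_lt_div_iff₀ hb (by positivity)]
        field_simp
        nlinarith [mul_lt_mul_of_pos_left hab (mul_pos ha ha)]
    _ ≤ (a + b) / (2 * a ^ (a / (a + b)) * b ^ (b / (a + b))) := by
        rw [mul_assoc]
        gcongr

lemma two_rpow_mul_sub_one_div_rpow_lt {x : ℝ} (hx : 2 < x) :
    2 ^ (1 / (x - 1)) * (x - 1) / x ^ (x / (x - 1)) < (x - 1) / x := by
  have hx0 : 0 < x := by linarith
  have hx1 : 0 < x - 1 := by linarith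
  have hsplit : x ^ (x / (x - 1)) = x * x ^ (1 / (x - 1)) := by
    rw [show x / (x - 1) = 1 + 1 / (x - 1) by field_simp; ring, rpow_add hx0, rpow_one]
  have hlt : (2 : ℝ) ^ (1 / (x - 1)) < x ^ (1 / (x - 1)) :=
    rpow_lt_rpow (by norm_num) hx (by positivity)
  rw [hsplit, mul_comm x, ← div_div, div_lt_div_iff_of_pos_right hx0,
    div_lt_iff₀ (by positivity), mul_comm]
  exact mul_lt_mul_of_pos_left hlt hx1

end Real

theorem stmt_13 (N : ℕ) (hN : 3 ≤ N) :
    (2 * (N : ℝ) - 1) /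
        (2 * ((N : ℝ) - 1) ^ (((N : ℝ) - 1) / (2 * (N : ℝ) - 1)) *
          (N : ℝ) ^ ((N : ℝ) / (2 * (N : ℝ) - 1))) >
      (2 : ℝ) ^ (1 / ((N : ℝ) - 1)) * ((N : ℝ) - 1) /
        (N : ℝ) ^ ((N : ℝ) / ((N : ℝ) - 1)) := by
  have hN' : (3 : ℝ) ≤ N := by exact_mod_cast hN
  have hleft := Real.div_lt_add_div_two_mul_rpow_mul_rpow (a := (N : ℝ) - 1) (b := N)
    (by linarith) (by linarith)
  rw [show (N : ℝ) - 1 + N = 2 * N - 1 by ring] at hleft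
  exact (Real.two_rpow_mul_sub_one_div_rpow_lt (by linarith)).trans hleft
end

section
/- Let N ≥ 3 be an integer, let 𝔞, 𝔡 > 0 and 𝔟 > 0. Then for every z > 0, 𝔡 z^N − 𝔟 z + 𝔞 z^{-(N-1)} > (2N−1) / (2 (N−1)^{(N−1)/(2N−1)} N^{N/(2N−1)}) · (𝔡^{(N−1)/(2N−1)} 𝔞^{N/(2N−1)} − 𝔟^{N/(N−1)} / 𝔡^{1/(N−1)}). -/
/-!
Split `d z^N` into two halves. Weighted AM-GM with weights `(N-1)/(2N-1)` and `N/(2N-1)` bounds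
`d z^N / 2 + a z^{-(N-1)}` below by a constant times `d^{(N-1)/(2N-1)} a^{N/(2N-1)}`, and Young's
inequality with exponents `N` and `N/(N-1)` bounds `b z` above by `d z^N / 2` plus a constant times
`b^{N/(N-1)} / d^{1/(N-1)}`. The first constant is at least the stated one and the second, at most
`(N-1)/N`, is strictly smaller.
-/

open Real

theorem le_mul_rpow_add_mul_rpow_neg {p q A B z : ℝ} (hp : 0 < p) (hq : 0 < q) (hA : 0 < A)
    (hB : 0 < B) (hz : 0 < z) :
    (p + q) * (A / q) ^ (q / (p + q)) * (B / p) ^ (p / (p + q)) ≤ A * z ^ p + B * z ^ (-q) := by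
  have hpq : 0 < p + q := by positivity
  have hw : q / (p + q) + p / (p + q) = 1 := by field_simp; ring
  have amgm := geom_mean_le_arith_mean2_weighted (by positivity) (by positivity)
    (by positivity : 0 ≤ (p + q) * (A / q) * z ^ p)
    (by positivity : 0 ≤ (p + q) * (B / p) * z ^ (-q)) hw
  have hzpow : z ^ (p * (q / (p + q))) * z ^ (-q * (p / (p + q))) = 1 := by
    rw [← rpow_add hz, show p * (q / (p + q)) + -q * (p / (p + q)) = 0 by ring, rpow_zero]
  convert amgm using 1
  · rw [mul_rpow (by positivity) (by positivity), mul_rpow (by positivity) (by positivity),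
      mul_rpow (by positivity) (by positivity), mul_rpow (by positivity) (by positivity),
      ← rpow_mul hz.le, ← rpow_mul hz.le]
    calc (p + q) * (A / q) ^ (q / (p + q)) * (B / p) ^ (p / (p + q))
        = ((p + q) ^ (q / (p + q)) * (p + q) ^ (p / (p + q))) * (A / q) ^ (q / (p + q)) *
            (B / p) ^ (p / (p + q)) * 1 := by
          rw [← rpow_add hpq, hw, rpow_one, mul_one]
      _ = _ := by rw [← hzpow]; ring
  · field_simp

theorem mul_le_mul_rpow_add_rpow_conj {p A b z : ℝ} (hp : 1 < p) (hA : 0 < A) (hb : 0 ≤ b)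
    (hz : 0 ≤ z) :
    b * z ≤ A * z ^ p + (p - 1) / p * b ^ (p / (p - 1)) / (p * A) ^ (1 / (p - 1)) := by
  set c := (p * A) ^ p⁻¹
  have hc : 0 < c := by positivity
  have hcp : c ^ p = p * A := rpow_inv_rpow (by positivity) (by positivity)
  have hcq : c ^ conjExponent p = (p * A) ^ (1 / (p - 1)) := by
    rw [← rpow_mul (by positivity), conjExponent]
    congr 1
    field_simp
  calc b * z = c * z * (b / c) := by field_simp
    _ ≤ (c * z) ^ p / p + (b / c) ^ conjExponent p / conjExponent p :=
      young_inequality_of_nonneg (by positivity) (by positivity) (.conjExponent hp)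
    _ = _ := by
      rw [mul_rpow hc.le hz, div_rpow hb hc.le, hcp, hcq, conjExponent]
      field_simp

section

variable {n : ℝ}

theorem sub_one_div_lt_two_mul_sub_one_div (hn : 1 < n) :
    (n - 1) / n <
      (2 * n - 1) / (2 * (n - 1) ^ ((n - 1) / (2 * n - 1)) * n ^ (n / (2 * n - 1))) := by
  have hw : (n - 1) / (2 * n - 1) + n / (2 * n - 1) = 1 := by
    rw [← add_div, div_eq_one_iff_eq (by linarith)]; ring
  have hden : 2 * (n - 1) ^ ((n - 1) / (2 * n - 1)) * n ^ (n / (2 * n - 1)) ≤ 2 * n :=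
    calc 2 * (n - 1) ^ ((n - 1) / (2 * n - 1)) * n ^ (n / (2 * n - 1))
        ≤ 2 * n ^ ((n - 1) / (2 * n - 1)) * n ^ (n / (2 * n - 1)) := by
          have hα : 0 ≤ (n - 1) / (2 * n - 1) := div_nonneg (by linarith) (by linarith)
          gcongr
          linarith
      _ = 2 * n := by rw [mul_assoc, ← rpow_add (by linarith), hw, rpow_one]
  calc (n - 1) / n < (2 * n - 1) / (2 * n) := by
        rw [div_lt_div_iff₀ (by linarith) (by linarith)]; nlinarith
    _ ≤ _ := div_le_div_of_nonneg_left (by linarith) (by positivity) hden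

theorem mul_rpow_mul_rpow_le_half_mul_rpow_add_mul_rpow_neg {a d z : ℝ} (hn : 1 < n) (ha : 0 < a)
    (hd : 0 < d) (hz : 0 < z) :
    (2 * n - 1) / (2 * (n - 1) ^ ((n - 1) / (2 * n - 1)) * n ^ (n / (2 * n - 1))) *
        (d ^ ((n - 1) / (2 * n - 1)) * a ^ (n / (2 * n - 1))) ≤
      d / 2 * z ^ n + a * z ^ (-(n - 1)) := by
  have amgm := le_mul_rpow_add_mul_rpow_neg (p := n) (by linarith) (by linarith : 0 < n - 1)
    (by positivity : 0 < d / 2) ha hz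
  rw [show n + (n - 1) = 2 * n - 1 by ring] at amgm
  have h2 : (2 : ℝ) ^ ((n - 1) / (2 * n - 1)) ≤ 2 :=
    rpow_le_self_of_one_le one_le_two (by rw [div_le_one (by linarith)]; linarith)
  refine le_trans ?_ amgm
  rw [div_div, div_rpow hd.le (by positivity), mul_rpow zero_le_two (by linarith),
    div_rpow ha.le (by linarith)]
  calc _ = (2 * n - 1) * (d ^ ((n - 1) / (2 * n - 1)) / (2 * (n - 1) ^ ((n - 1) / (2 * n - 1)))) *
        (a ^ (n / (2 * n - 1)) / n ^ (n / (2 * n - 1))) := by ring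
    _ ≤ _ := by
      gcongr
      linarith

theorem mul_lt_half_mul_rpow_add_mul_rpow_div_rpow {b d z : ℝ} (hn : 2 ≤ n) (hb : 0 < b)
    (hd : 0 < d) (hz : 0 ≤ z) :
    b * z < d / 2 * z ^ n +
      (2 * n - 1) / (2 * (n - 1) ^ ((n - 1) / (2 * n - 1)) * n ^ (n / (2 * n - 1))) *
        (b ^ (n / (n - 1)) / d ^ (1 / (n - 1))) := by
  have young := mul_le_mul_rpow_add_rpow_conj (p := n) (by linarith)
    (by positivity : 0 < d / 2) hb.le hz
  have hdn : d ^ (1 / (n - 1)) ≤ (n * (d / 2)) ^ (1 / (n - 1)) :=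
    rpow_le_rpow hd.le (by nlinarith) (div_nonneg zero_le_one (by linarith))
  calc b * z ≤ d / 2 * z ^ n + (n - 1) / n * b ^ (n / (n - 1)) / (n * (d / 2)) ^ (1 / (n - 1)) :=
        young
    _ ≤ d / 2 * z ^ n + (n - 1) / n * (b ^ (n / (n - 1)) / d ^ (1 / (n - 1))) := by
        rw [mul_div_assoc]
        gcongr
        exact div_nonneg (by linarith) (by linarith)
    _ < _ := by
        gcongr ?_ + ?_ * _
        exact sub_one_div_lt_two_mul_sub_one_div (by linarith)

end

theorem stmt_14 (N : ℕ) (hN : 3 ≤ N) (a b d : ℝ) (ha : 0 < a) (hd : 0 < d)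
    (hb : 0 < b) (z : ℝ) (hz : 0 < z) :
    d * z ^ (N : ℝ) - b * z + a * z ^ (-((N : ℝ) - 1)) >
      (2 * (N : ℝ) - 1) /
          (2 * ((N : ℝ) - 1) ^ (((N : ℝ) - 1) / (2 * (N : ℝ) - 1)) *
            (N : ℝ) ^ ((N : ℝ) / (2 * (N : ℝ) - 1))) *
        (d ^ (((N : ℝ) - 1) / (2 * (N : ℝ) - 1)) *
            a ^ ((N : ℝ) / (2 * (N : ℝ) - 1)) -
          b ^ ((N : ℝ) / ((N : ℝ) - 1)) / d ^ (1 / ((N : ℝ) - 1))) := by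
  have hn : (2 : ℝ) ≤ N := by exact_mod_cast (by omega : 2 ≤ N)
  have convex_part :=
    mul_rpow_mul_rpow_le_half_mul_rpow_add_mul_rpow_neg (n := N) (by linarith) ha hd hz
  have linear_part := mul_lt_half_mul_rpow_add_mul_rpow_div_rpow hn hb hd hz.le
  linarith
end

section
/- Let N ≥ 3 be an integer, let 𝔞, 𝔡 > 0 and 𝔟, 𝔠, 𝔥 ∈ ℝ. Suppose 𝔟 ≠ 0 and (𝔥 − 𝔠) 𝔡^{(N+1)/(2N−1)} 𝔞^{(N−2)/(2N−1)} / 𝔟² < − (N+1)^{(N+1)/(2N−1)} (N−2)^{(N−2)/(2N−1)} / (4 (2N−1)). Then there is no z > 0 with 𝔥 − 𝔠 ≥ 𝔡 z^N − 𝔟 z + 𝔞 z^{-(N-1)}. -/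
/-! Weighted AM-GM with weights `α = (N+1)/(2N-1)` and `β = (N-2)/(2N-1)`, chosen so that
`α N - β (N-1) = 2`, bounds `𝔡 z^N + 𝔞 z^{-(N-1)}` below by `E z²` with an explicit constant `E`.
Hence the right-hand side is at least `E z² - 𝔟 z ≥ -𝔟²/(4E)`, and the hypothesis says exactly
that `𝔥 - 𝔠 < -𝔟²/(4E)`. -/

open Real

lemma rpow_div_mul_rpow_div_le_add {α β x y : ℝ} (hα : 0 < α) (hβ : 0 < β) (hαβ : α + β = 1)
    (hx : 0 ≤ x) (hy : 0 ≤ y) : (x / α) ^ α * (y / β) ^ β ≤ x + y := by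
  have h := geom_mean_le_arith_mean2_weighted hα.le hβ.le
    (div_nonneg hx hα.le) (div_nonneg hy hβ.le) hαβ
  rwa [mul_div_cancel₀ x hα.ne', mul_div_cancel₀ y hβ.ne'] at h

lemma mul_rpow_le_add_rpow {α β d a z p q : ℝ} (hα : 0 < α) (hβ : 0 < β) (hαβ : α + β = 1)
    (hd : 0 ≤ d) (ha : 0 ≤ a) (hz : 0 < z) :
    (d / α) ^ α * (a / β) ^ β * z ^ (α * p + β * q) ≤ d * z ^ p + a * z ^ q := by
  have hzp := (rpow_pos_of_pos hz p).le
  have hzq := (rpow_pos_of_pos hz q).le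
  calc (d / α) ^ α * (a / β) ^ β * z ^ (α * p + β * q)
      = (d * z ^ p / α) ^ α * (a * z ^ q / β) ^ β := by
        rw [mul_div_right_comm, mul_div_right_comm a,
          mul_rpow (div_nonneg hd hα.le) hzp, mul_rpow (div_nonneg ha hβ.le) hzq,
          ← rpow_mul hz.le, ← rpow_mul hz.le, rpow_add hz, mul_comm p, mul_comm q]
        ring
    _ ≤ d * z ^ p + a * z ^ q :=
        rpow_div_mul_rpow_div_le_add hα hβ hαβ (mul_nonneg hd hzp) (mul_nonneg ha hzq)

lemma div_rpow_mul_div_rpow_of_add_eq {u v w d a : ℝ} (hu : 0 < u) (hv : 0 < v)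
    (huvw : u + v = w) (hd : 0 ≤ d) (ha : 0 ≤ a) :
    (d / (u / w)) ^ (u / w) * (a / (v / w)) ^ (v / w) =
      d ^ (u / w) * a ^ (v / w) * w / (u ^ (u / w) * v ^ (v / w)) := by
  have hw : 0 < w := huvw ▸ add_pos hu hv
  have hw_pow : w ^ (u / w) * w ^ (v / w) = w := by
    rw [← rpow_add hw, ← add_div, huvw, div_self hw.ne', rpow_one]
  rw [div_div_eq_mul_div, div_div_eq_mul_div, div_rpow (mul_nonneg hd hw.le) hu.le,
    div_rpow (mul_nonneg ha hw.le) hv.le, mul_rpow hd hw.le, mul_rpow ha hw.le]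
  calc _ = d ^ (u / w) * a ^ (v / w) * (w ^ (u / w) * w ^ (v / w)) /
        (u ^ (u / w) * v ^ (v / w)) := by ring
    _ = _ := by rw [hw_pow]

lemma neg_sq_div_le_mul_sq_sub_mul {E : ℝ} (hE : 0 < E) (b z : ℝ) :
    -b ^ 2 / (4 * E) ≤ E * z ^ 2 - b * z := by
  rw [div_le_iff₀ (by positivity)]
  nlinarith [sq_nonneg (2 * E * z - b)]

theorem stmt_16 (N : ℕ) (hN : 3 ≤ N) (a b c d h : ℝ) (ha : 0 < a) (hd : 0 < d)
    (hb : b ≠ 0)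
    (hcond : (h - c) * d ^ (((N : ℝ) + 1) / (2 * (N : ℝ) - 1)) *
        a ^ (((N : ℝ) - 2) / (2 * (N : ℝ) - 1)) / b ^ 2 <
      -(((N : ℝ) + 1) ^ (((N : ℝ) + 1) / (2 * (N : ℝ) - 1)) *
          ((N : ℝ) - 2) ^ (((N : ℝ) - 2) / (2 * (N : ℝ) - 1))) /
        (4 * (2 * (N : ℝ) - 1))) :
    ¬ ∃ z : ℝ, 0 < z ∧
      h - c ≥ d * z ^ (N : ℝ) - b * z + a * z ^ (-((N : ℝ) - 1)) := by
  rintro ⟨z, hz, hineq⟩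
  have hn : (3 : ℝ) ≤ N := by exact_mod_cast hN
  set n : ℝ := (N : ℝ)
  have hw : 0 < 2 * n - 1 := by linarith
  have hsum : (n + 1) + (n - 2) = 2 * n - 1 := by ring
  set α := (n + 1) / (2 * n - 1)
  set β := (n - 2) / (2 * n - 1)
  have hαβ : α + β = 1 := by rw [← add_div, hsum, div_self hw.ne']
  have hexp : α * n + β * -(n - 1) = 2 := by
    rw [div_mul_eq_mul_div, div_mul_eq_mul_div, ← add_div, div_eq_iff hw.ne']
    ring
  set P := (n + 1) ^ α * (n - 2) ^ β
  have hP : 0 < P := mul_pos (rpow_pos_of_pos (by linarith) α) (rpow_pos_of_pos (by linarith) β)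
  set E := d ^ α * a ^ β * (2 * n - 1) / P
  have hE : 0 < E := by positivity
  have hamgm : E * z ^ 2 ≤ d * z ^ n + a * z ^ (-(n - 1)) := by
    have hweighted := mul_rpow_le_add_rpow (p := n) (q := -(n - 1)) (div_pos (by linarith) hw)
      (div_pos (by linarith) hw) hαβ hd.le ha.le hz
    rwa [hexp, rpow_two, div_rpow_mul_div_rpow_of_add_eq (by linarith) (by linarith) hsum
      hd.le ha.le] at hweighted
  have hgap : h - c < -b ^ 2 / (4 * E) := by
    rw [div_lt_div_iff₀ (by positivity) (by positivity)] at hcond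
    have hscale : (h - c) * (4 * E) * P = (h - c) * d ^ α * a ^ β * (4 * (2 * n - 1)) := by
      simp only [E]
      field_simp
    rw [lt_div_iff₀ (by positivity), ← mul_lt_mul_iff_left₀ hP, hscale]
    linarith
  linarith [neg_sq_div_le_mul_sq_sub_mul hE b z]
end
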